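/- For positive integers n and m, sum over divisors d of n of d * (sum_{k=0}^{m} L_k(d)) equals (B_{n+1}(m+1) - B_{n+1})/(n+1), where B denotes Bernoulli polynomials and numbers. -/

import Mathlib

/-!
Witt's formula is the Möbius inversion of the necklace identity `∑_{d ∣ n} d · L_k(d) = k ^ n`.
Exchanging the sums over `d ∣ n` and `k ≤ m` therefore turns the left side into `∑_{k ≤ m} k ^ n`,
which Faulhaber's formula evaluates.
-/

/-- Witt's formula: the number of `k`-ary Lyndon words of length `n`. -/
noncomputable def lyndonCount (k n : ℕ) : ℚ :=
  (1 / n) * ∑ d ∈ n.divisors, (ArithmeticFunction.moebius (n / d) : ℚ) * (k : ℚ) ^ d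

open ArithmeticFunction Finset
open scoped ArithmeticFunction.Moebius

theorem sum_divisors_sum_divisors_moebius_mul {R : Type*} [NonAssocRing R] (g : ℕ → R)
    {n : ℕ} (hn : 0 < n) :
    ∑ d ∈ n.divisors, ∑ e ∈ d.divisors, (μ (d / e) : R) * g e = g n := by
  refine sum_eq_iff_sum_mul_moebius_eq.2 (fun N _ => ?_) n hn
  exact Nat.sum_divisorsAntidiagonal' (fun a b => (μ a : R) * g b)

theorem sum_divisors_mul_lyndonCount (k : ℕ) {n : ℕ} (hn : 0 < n) :
    ∑ d ∈ n.divisors, (d : ℚ) * lyndonCount k d = (k : ℚ) ^ n := by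
  rw [← sum_divisors_sum_divisors_moebius_mul (fun e => (k : ℚ) ^ e) hn]
  refine sum_congr rfl fun d hd => ?_
  have hd : (d : ℚ) ≠ 0 := by exact_mod_cast (Nat.pos_of_mem_divisors hd).ne'
  rw [lyndonCount, ← mul_assoc, mul_one_div_cancel hd, one_mul]

theorem sum_divisors_lyndonCount_eq_bernoulli_general (n m : ℕ) (hn : 1 ≤ n) :
    ∑ d ∈ n.divisors, (d : ℚ) * ∑ k ∈ Finset.range (m + 1), lyndonCount k d =
      ((Polynomial.bernoulli (n + 1)).eval ((m : ℚ) + 1) - bernoulli (n + 1)) / (n + 1) := by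
  have sum_eq_sum_pow : ∑ d ∈ n.divisors, (d : ℚ) * ∑ k ∈ range (m + 1), lyndonCount k d =
      ∑ k ∈ range (m + 1), (k : ℚ) ^ n := by
    simp_rw [mul_sum]
    rw [sum_comm]
    exact sum_congr rfl fun k _ => sum_divisors_mul_lyndonCount k hn
  rw [sum_eq_sum_pow, eq_div_iff (by positivity), mul_comm]
  exact_mod_cast Polynomial.sum_range_pow_eq_bernoulli_sub (m + 1) n

theorem sum_divisors_lyndonCount_eq_bernoulli (n m : ℕ) (hn : 1 ≤ n) (hm : 1 ≤ m) :
    ∑ d ∈ n.divisors, (d : ℚ) * ∑ k ∈ Finset.range (m + 1), lyndonCount k d =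
      ((Polynomial.bernoulli (n + 1)).eval ((m : ℚ) + 1) - bernoulli (n + 1)) / (n + 1) :=
  sum_divisors_lyndonCount_eq_bernoulli_general n m hn
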